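/- arXiv:1111.6830 — 3 statements merged into one kernel-verified Lean document; each statement's English description precedes it below -/
import Mathlib

section
/- Let n and s be coprime integers with 1 ≤ s < n, and let I ⊆ {1, ..., n} be an (n,s)-admissible subset with elements i_1 < i_2 < ... < i_s. Then i_1 = 1, and for every j with 2 ≤ j ≤ s one has i_j ≤ ⌈(j−1)·n/s⌉. -/
/-! Below the `j`-th element `i_j` of `I` lie exactly `j - 1` elements of `I`, so admissibility
at `m = i_j - 1` reads `s (i_j - 1) < n (j - 1)`. For `j = 1` this forces `i_1 = 1`; for `j ≥ 2`
it says `i_j - 1 < (j - 1) n / s`, i.e. `i_j ≤ ⌈(j - 1) n / s⌉`. -/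

open Finset

theorem Finset.card_filter_lt_orderEmbOfFin {α : Type*} [LinearOrder α] (I : Finset α) {k : ℕ}
    (h : I.card = k) (i : Fin k) : #{x ∈ I | x < I.orderEmbOfFin h i} = i := by
  set e := I.orderEmbOfFin h
  have hfilter : {x ∈ I | x < e i} = (Iio i).map e.toEmbedding := by
    ext x
    simp only [mem_filter, mem_map, mem_Iio, RelEmbedding.coe_toEmbedding]
    constructor
    · rintro ⟨hxI, hx⟩
      obtain ⟨k, rfl⟩ : x ∈ Set.range e := by rw [range_orderEmbOfFin]; exact hxI
      exact ⟨k, e.lt_iff_lt.mp hx, rfl⟩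
    · rintro ⟨k, hk, rfl⟩
      exact ⟨orderEmbOfFin_mem I h k, e.lt_iff_lt.mpr hk⟩
  rw [hfilter, card_map, Fin.card_Iio]

theorem Int.lt_ceil_mul_div_of_mul_lt {s x n j : ℕ} (hs : 0 < s) (h : s * x < n * j) :
    (x : ℤ) < ⌈(j : ℚ) * n / s⌉ := by
  rw [Int.lt_ceil, Int.cast_natCast, lt_div_iff₀ (by exact_mod_cast hs)]
  rw [mul_comm s, mul_comm n] at h
  exact_mod_cast h

theorem mul_pred_orderEmbOfFin_lt_of_admissible {n s : ℕ} {I : Finset ℕ}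
    (hI : I ⊆ Icc 1 n) (hcard : I.card = s)
    (hadm : ∀ m, 1 ≤ m → m < n → s * m < n * (I ∩ Icc 1 m).card)
    (j : Fin s) (hj : 2 ≤ I.orderEmbOfFin hcard j) :
    s * (I.orderEmbOfFin hcard j - 1) < n * j := by
  set x := I.orderEmbOfFin hcard j
  have hxn : x ≤ n := (mem_Icc.mp (hI (orderEmbOfFin_mem I hcard j))).2
  have hbelow : I ∩ Icc 1 (x - 1) = {y ∈ I | y < x} := by
    ext y
    have hy : y ∈ I → 1 ≤ y := fun hyI => (mem_Icc.mp (hI hyI)).1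
    simp only [mem_inter, mem_Icc, mem_filter]
    constructor
    · rintro ⟨hyI, -, hyx⟩
      exact ⟨hyI, by omega⟩
    · rintro ⟨hyI, hyx⟩
      exact ⟨hyI, hy hyI, by omega⟩
  have := hadm (x - 1) (by omega) (by omega)
  rwa [hbelow, card_filter_lt_orderEmbOfFin] at this

theorem admissible_increment_upper_bound_general (n s : ℕ) (hs : 1 ≤ s)
    (I : Finset ℕ) (hI : I ⊆ Finset.Icc 1 n) (hcard : I.card = s)
    (hadm : ∀ m, 1 ≤ m → m < n → s * m < n * (I ∩ Finset.Icc 1 m).card) :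
    I.orderEmbOfFin hcard ⟨0, hs⟩ = 1 ∧
      ∀ j : Fin s, 1 ≤ (j : ℕ) →
        (I.orderEmbOfFin hcard j : ℤ) ≤ ⌈(((j : ℕ) : ℚ) * n / s)⌉ := by
  have hbound := mul_pred_orderEmbOfFin_lt_of_admissible hI hcard hadm
  set e := I.orderEmbOfFin hcard
  have hfirst : e ⟨0, hs⟩ = 1 := by
    have hpos : 1 ≤ e ⟨0, hs⟩ := (mem_Icc.mp (hI (orderEmbOfFin_mem I hcard _))).1
    by_contra hne
    simpa using hbound ⟨0, hs⟩ (by omega)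
  refine ⟨hfirst, fun j hj => ?_⟩
  have hlt : e ⟨0, hs⟩ < e j := e.lt_iff_lt.mpr (Fin.mk_lt_of_lt_val hj)
  have := Int.lt_ceil_mul_div_of_mul_lt hs (hbound j (by omega))
  omega

/-- Let `n` and `s` be coprime with `1 ≤ s < n` and let `I ⊆ {1, …, n}` be an
`(n,s)`-admissible subset (i.e. `|I| = s` and `n * |I ∩ {1, …, m}| > s * m` for all
`1 ≤ m < n`), with elements `i_1 < ⋯ < i_s`.  Then `i_1 = 1` and for every `j` with
`2 ≤ j ≤ s` one has `i_j ≤ ⌈(j-1) * n / s⌉` (ceiling of the rational number `(j-1)n/s`).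
(Below the `0`-based index `j : Fin s` with `1 ≤ j` corresponds to `i_{j+1}`.) -/
theorem admissible_increment_upper_bound (n s : ℕ) (hs : 1 ≤ s) (hsn : s < n)
    (hcop : Nat.Coprime n s)
    (I : Finset ℕ) (hI : I ⊆ Finset.Icc 1 n) (hcard : I.card = s)
    (hadm : ∀ m, 1 ≤ m → m < n → s * m < n * (I ∩ Finset.Icc 1 m).card) :
    I.orderEmbOfFin hcard ⟨0, hs⟩ = 1 ∧
      ∀ j : Fin s, 1 ≤ (j : ℕ) →
        (I.orderEmbOfFin hcard j : ℤ) ≤ ⌈(((j : ℕ) : ℚ) * n / s)⌉ :=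
  admissible_increment_upper_bound_general n s hs I hI hcard hadm
end

section
/- Let n ≥ 3 be an odd integer. Then the (n,2)-admissible subsets of {1, ..., n} are exactly the sets {1, i} with 2 ≤ i ≤ (n+1)/2. Consequently, for every positive real number q, Σ_{I (n,2)-admissible} q^{(Σ_{i∈I} i) − 3} = 1 + q + q^2 + ... + q^{⌊n/2⌋ − 1}. -/
open scoped Classical

/-- A subset `I ⊆ {1, …, n}` is `(n,s)`-admissible if `|I| = s` and for every `m` with
`1 ≤ m < n` one has `n * |I ∩ {1, …, m}| > s * m`. -/
def IsAdmissible (n s : ℕ) (I : Finset ℕ) : Prop :=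
  I ⊆ Finset.Icc 1 n ∧ I.card = s ∧
    ∀ m, 1 ≤ m → m < n → s * m < n * (I ∩ Finset.Icc 1 m).card

/-!
Write an admissible pair as `{a, b}` with `a < b`. Admissibility at `m = a - 1` (no element
counted) forces `a = 1`, and at `m = b - 1` (one element counted) it reads `2 (b - 1) < n`,
i.e. `b ≤ (n + 1) / 2`; for `m ≥ b` it is automatic. The exponent of `{1, i}` is `i - 2`, and for
odd `n` these exponents run over `0, …, n / 2 - 1`.
-/

open Finset

lemma card_pair_inter_Icc_one {a b m : ℕ} (ha : 1 ≤ a) (hab : a < b) :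
    (({a, b} : Finset ℕ) ∩ Icc 1 m).card = (if a ≤ m then 1 else 0) + (if b ≤ m then 1 else 0) := by
  have hfilter : ({a, b} : Finset ℕ) ∩ Icc 1 m = ({a, b} : Finset ℕ).filter (· ≤ m) := by
    ext x
    simp only [mem_inter, mem_Icc, mem_filter, mem_insert, mem_singleton]
    omega
  rw [hfilter, card_filter, sum_pair hab.ne]

lemma isAdmissible_two_pair_iff {n a b : ℕ} (ha : 1 ≤ a) (hab : a < b) :
    IsAdmissible n 2 {a, b} ↔ a = 1 ∧ 2 * b ≤ n + 1 := by
  constructor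
  · rintro ⟨hsub, -, hcond⟩
    have hbn : b ≤ n := (mem_Icc.mp (hsub (mem_insert_of_mem (mem_singleton_self b)))).2
    have ha1 : a = 1 := by
      by_contra hne
      have h := hcond (a - 1) (by omega) (by omega)
      rw [card_pair_inter_Icc_one ha hab] at h
      split_ifs at h <;> omega
    have h := hcond (b - 1) (by omega) (by omega)
    rw [card_pair_inter_Icc_one ha hab] at h
    split_ifs at h <;> omega
  · rintro ⟨rfl, hb⟩
    refine ⟨?_, card_pair hab.ne, fun m _ _ => ?_⟩
    · intro x hx
      simp only [mem_insert, mem_singleton] at hx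
      rw [mem_Icc]
      omega
    · rw [card_pair_inter_Icc_one ha hab]
      split_ifs <;> omega

lemma IsAdmissible.exists_pair {n : ℕ} {I : Finset ℕ} (h : IsAdmissible n 2 I) :
    ∃ a b, 1 ≤ a ∧ a < b ∧ I = {a, b} := by
  obtain ⟨hsub, hcard, -⟩ := h
  obtain ⟨a, b, hne, rfl⟩ := card_eq_two.mp hcard
  have ha : 1 ≤ a := (mem_Icc.mp (hsub (mem_insert_self a {b}))).1
  have hb : 1 ≤ b := (mem_Icc.mp (hsub (mem_insert_of_mem (mem_singleton_self b)))).1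
  rcases hne.lt_or_gt with hab | hba
  · exact ⟨a, b, ha, hab, rfl⟩
  · exact ⟨b, a, hb, hba, pair_comm a b⟩

theorem isAdmissible_two_iff {n : ℕ} {I : Finset ℕ} :
    IsAdmissible n 2 I ↔ ∃ i, 2 ≤ i ∧ i ≤ (n + 1) / 2 ∧ I = {1, i} := by
  constructor
  · intro h
    obtain ⟨a, b, ha, hab, rfl⟩ := h.exists_pair
    obtain ⟨rfl, hb⟩ := (isAdmissible_two_pair_iff ha hab).mp h
    exact ⟨b, by omega, by omega, rfl⟩
  · rintro ⟨i, hi, hin, rfl⟩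
    exact (isAdmissible_two_pair_iff le_rfl (by omega)).mpr ⟨rfl, by omega⟩

lemma filter_isAdmissible_two (n : ℕ) :
    (Icc 1 n).powerset.filter (IsAdmissible n 2) =
      (Icc 2 ((n + 1) / 2)).image fun i => ({1, i} : Finset ℕ) := by
  ext I
  simp only [mem_filter, mem_powerset, mem_image, mem_Icc]
  constructor
  · rintro ⟨-, h⟩
    obtain ⟨i, hi, hin, rfl⟩ := isAdmissible_two_iff.mp h
    exact ⟨i, ⟨hi, hin⟩, rfl⟩
  · rintro ⟨i, ⟨hi, hin⟩, rfl⟩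
    have h : IsAdmissible n 2 {1, i} := isAdmissible_two_iff.mpr ⟨i, hi, hin, rfl⟩
    exact ⟨h.1, h⟩

lemma sum_filter_isAdmissible_two {M : Type*} [AddCommMonoid M] (n : ℕ) (f : Finset ℕ → M) :
    ∑ I ∈ (Icc 1 n).powerset.filter (IsAdmissible n 2), f I =
      ∑ i ∈ Icc 2 ((n + 1) / 2), f {1, i} := by
  rw [filter_isAdmissible_two, sum_image]
  intro a ha b _ hab
  have hmem : a ∈ ({1, b} : Finset ℕ) := by
    rw [← show ({1, a} : Finset ℕ) = {1, b} from hab]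
    exact mem_insert_of_mem (mem_singleton_self a)
  simp only [coe_Icc, Set.mem_Icc, mem_insert, mem_singleton] at ha hmem
  omega

theorem admissible_signature_two_general (n : ℕ) (hodd : Odd n) (q : ℝ) :
    (∀ I : Finset ℕ, IsAdmissible n 2 I ↔ ∃ i, 2 ≤ i ∧ i ≤ (n + 1) / 2 ∧ I = {1, i}) ∧
    ∑ I ∈ (Finset.Icc 1 n).powerset.filter (IsAdmissible n 2),
        q ^ ((∑ i ∈ I, i) - 3) = ∑ t ∈ Finset.range (n / 2), q ^ t := by
  refine ⟨fun I => isAdmissible_two_iff, ?_⟩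
  obtain ⟨k, rfl⟩ := hodd
  have hK : (2 * k + 1 + 1) / 2 + 1 - 2 = (2 * k + 1) / 2 := by omega
  rw [sum_filter_isAdmissible_two, ← Ico_add_one_right_eq_Icc, sum_Ico_eq_sum_range, hK]
  refine sum_congr rfl fun t _ => ?_
  rw [sum_pair (by omega)]
  congr 1
  omega

/-- Let `n ≥ 3` be odd.  The `(n,2)`-admissible subsets of `{1, …, n}` are
exactly the sets `{1, i}` with `2 ≤ i ≤ (n+1)/2`.  Consequently, for every positive real `q`,
`∑_{I (n,2)-admissible} q^{(∑_{i ∈ I} i) - 3} = 1 + q + q² + ⋯ + q^{⌊n/2⌋ - 1}`. -/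
theorem admissible_signature_two (n : ℕ) (hn : 3 ≤ n) (hodd : Odd n)
    (q : ℝ) (hq : 0 < q) :
    (∀ I : Finset ℕ, IsAdmissible n 2 I ↔ ∃ i, 2 ≤ i ∧ i ≤ (n + 1) / 2 ∧ I = {1, i}) ∧
    ∑ I ∈ (Finset.Icc 1 n).powerset.filter (IsAdmissible n 2),
        q ^ ((∑ i ∈ I, i) - 3) = ∑ t ∈ Finset.range (n / 2), q ^ t :=
  admissible_signature_two_general n hodd q
end

section
/- Let n and s be coprime integers with 1 ≤ s < n. For every (n,s)-admissible subset I ⊆ {1, ..., n}, the integer e(I) := Σ_{i∈I} i − s(s+1)/2 is nonnegative. The polynomial P(T) := Σ_{I (n,s)-admissible} T^{e(I)} in ℤ[T] has constant term 1 and degree equal to 1 + Σ_{j=1}^{s−1} ⌈j·n/s⌉ − s(s+1)/2. -/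
/-!
Since `∑ i ∈ I, i = ∑_{m < n} #{i ∈ I | m < i} = ∑_{m < n} (#I - #(I ∩ [1, m]))` for
`I ⊆ [1, n]`, among subsets of a given size larger prefix counts `#(I ∩ [1, m])` mean a smaller
sum. The interval `[1, s]` has the largest possible prefix counts, so it is the unique
admissible set of minimal sum `s(s+1)/2`, whence the constant term `1`. Admissibility is the
lower bound `#(I ∩ [1, m]) ≥ ⌊sm/n⌋ + 1`; for coprime `n, s` it is attained by
`{⌊jn/s⌋ + 1 : 0 ≤ j < s}`, which is therefore the admissible set of maximal sum
`1 + ∑_{j=1}^{s-1} ⌈jn/s⌉`. All coefficients of `P` are nonnegative, so no cancellation occurs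
and the degree is the largest exponent.
-/

open scoped Classical

open Finset Polynomial

theorem Polynomial.coeff_sum_X_pow {R ι : Type*} [Semiring R] (S : Finset ι) (f : ι → ℕ)
    (d : ℕ) : (∑ i ∈ S, (X : R[X]) ^ f i).coeff d = #{i ∈ S | f i = d} := by
  simp only [finsetSum_coeff, coeff_X_pow, eq_comm (a := d), sum_boole]

theorem Polynomial.natDegree_sum_X_pow_eq {R ι : Type*} [Semiring R] [CharZero R] {S : Finset ι}
    {f : ι → ℕ} {i₀ : ι} (hi₀ : i₀ ∈ S) (hmax : ∀ i ∈ S, f i ≤ f i₀) :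
    (∑ i ∈ S, (X : R[X]) ^ f i).natDegree = f i₀ := by
  refine le_antisymm (natDegree_sum_le_of_forall_le _ _ fun i hi => ?_)
    (le_natDegree_of_ne_zero ?_)
  · exact (natDegree_X_pow_le _).trans (hmax i hi)
  · rw [coeff_sum_X_pow, Nat.cast_ne_zero, ← pos_iff_ne_zero, card_pos]
    exact ⟨i₀, mem_filter.2 ⟨hi₀, rfl⟩⟩

theorem Nat.ceil_natCast_div_natCast_of_not_dvd {a b : ℕ} (hb : 0 < b) (h : ¬ b ∣ a) :
    ⌈(a / b : ℚ)⌉₊ = a / b + 1 := by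
  have hr : 0 < a % b := Nat.pos_of_ne_zero fun h0 => h (Nat.dvd_of_mod_eq_zero h0)
  have hrb : a % b < b := Nat.mod_lt a hb
  have hdiv : (a : ℚ) = b * (a / b : ℕ) + (a % b : ℕ) := by
    exact_mod_cast (Nat.div_add_mod a b).symm
  have hbq : (0 : ℚ) < b := by exact_mod_cast hb
  rw [Nat.ceil_eq_iff (a / b).succ_ne_zero, Nat.succ_sub_one, lt_div_iff₀ hbq, div_le_iff₀ hbq,
    hdiv]
  constructor
  · have : (0 : ℚ) < (a % b : ℕ) := by exact_mod_cast hr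
    linarith
  · have : ((a % b : ℕ) : ℚ) ≤ b := by exact_mod_cast hrb.le
    push_cast; linarith

theorem sum_Icc_one_id (s : ℕ) : ∑ i ∈ Icc 1 s, i = s * (s + 1) / 2 := by
  have h := sum_range_id (s + 1)
  rw [range_eq_Ico, sum_eq_sum_Ico_succ_bot (Nat.succ_pos s)] at h
  simpa [Nat.mul_comm, Ico_add_one_right_eq_Icc] using h

theorem card_Icc_one_inter_Icc_one (k m : ℕ) : #(Icc 1 k ∩ Icc 1 m) = min k m := by
  have : Icc 1 k ∩ Icc 1 m = Icc 1 (min k m) := by ext; simp only [mem_inter, mem_Icc]; omega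
  rw [this, Nat.card_Icc, Nat.add_sub_cancel]

section PrefixCounts

variable {n : ℕ} {I J : Finset ℕ}

theorem zero_notMem_of_subset_Icc_one (hI : I ⊆ Icc 1 n) : 0 ∉ I := fun h0 => by
  simpa using hI h0

theorem card_le_of_subset_Icc_one (hI : I ⊆ Icc 1 n) : #I ≤ n :=
  (card_le_card hI).trans (by simp)

theorem sum_id_eq_sum_range_card_filter_lt (hI : ∀ i ∈ I, i ≤ n) :
    ∑ i ∈ I, i = ∑ m ∈ range n, #{i ∈ I | m < i} := by
  simp only [card_filter]
  rw [sum_comm]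
  refine sum_congr rfl fun i hi => ?_
  have hrange : {m ∈ range n | m < i} = range i := by
    ext m
    simp only [mem_filter, mem_range]
    have := hI i hi
    omega
  rw [← card_filter, hrange, card_range]

theorem card_filter_lt_add_card_inter_Icc (h0 : 0 ∉ I) (m : ℕ) :
    #{i ∈ I | m < i} + #(I ∩ Icc 1 m) = #I := by
  have : I ∩ Icc 1 m = {i ∈ I | ¬ m < i} := by
    ext i
    simp only [mem_inter, mem_Icc, mem_filter, not_lt]
    constructor
    · rintro ⟨hi, -, him⟩
      exact ⟨hi, him⟩
    · rintro ⟨hi, him⟩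
      exact ⟨hi, Nat.pos_of_ne_zero (ne_of_mem_of_not_mem hi h0), him⟩
  rw [this, card_filter_add_card_filter_not]

theorem card_filter_lt_le_of_card_inter_Icc_le (h0I : 0 ∉ I) (h0J : 0 ∉ J) (hcard : #I ≤ #J)
    {m : ℕ} (hm : #(J ∩ Icc 1 m) ≤ #(I ∩ Icc 1 m)) :
    #{i ∈ I | m < i} ≤ #{j ∈ J | m < j} := by
  have := card_filter_lt_add_card_inter_Icc h0I m
  have := card_filter_lt_add_card_inter_Icc h0J m
  omega

theorem sum_id_le_sum_id_of_card_inter_Icc_le (hI : I ⊆ Icc 1 n) (hJ : J ⊆ Icc 1 n)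
    (hcard : #I ≤ #J) (h : ∀ m < n, #(J ∩ Icc 1 m) ≤ #(I ∩ Icc 1 m)) :
    ∑ i ∈ I, i ≤ ∑ j ∈ J, j := by
  rw [sum_id_eq_sum_range_card_filter_lt fun i hi => (mem_Icc.1 (hI hi)).2,
    sum_id_eq_sum_range_card_filter_lt fun j hj => (mem_Icc.1 (hJ hj)).2]
  exact sum_le_sum fun m hm => card_filter_lt_le_of_card_inter_Icc_le
    (zero_notMem_of_subset_Icc_one hI) (zero_notMem_of_subset_Icc_one hJ) hcard
    (h m (mem_range.1 hm))

theorem card_inter_Icc_le_card_Icc_card_inter_Icc (m : ℕ) :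
    #(I ∩ Icc 1 m) ≤ #(Icc 1 #I ∩ Icc 1 m) := by
  rw [card_Icc_one_inter_Icc_one]
  exact le_min (card_le_card inter_subset_left)
    ((card_le_card inter_subset_right).trans (by simp))

theorem sum_Icc_card_le_sum_id (hI : I ⊆ Icc 1 n) : ∑ i ∈ Icc 1 #I, i ≤ ∑ i ∈ I, i :=
  sum_id_le_sum_id_of_card_inter_Icc_le (Icc_subset_Icc_right (card_le_of_subset_Icc_one hI))
    hI (by simp) fun m _ => card_inter_Icc_le_card_Icc_card_inter_Icc m

theorem eq_Icc_card_of_sum_id_le (hI : I ⊆ Icc 1 n)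
    (h : ∑ i ∈ I, i ≤ ∑ i ∈ Icc 1 #I, i) : I = Icc 1 #I := by
  have hIn : I ⊆ Icc 1 (n + 1) := hI.trans (Icc_subset_Icc_right n.le_succ)
  have hIcc : Icc 1 #I ⊆ Icc 1 (n + 1) :=
    Icc_subset_Icc_right ((card_le_of_subset_Icc_one hI).trans n.le_succ)
  have hle : ∀ m ∈ range (n + 1), #{i ∈ Icc 1 #I | m < i} ≤ #{i ∈ I | m < i} := fun m _ =>
    card_filter_lt_le_of_card_inter_Icc_le (by simp) (zero_notMem_of_subset_Icc_one hI)
      (by simp) (card_inter_Icc_le_card_Icc_card_inter_Icc m)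
  have hsum : ∑ m ∈ range (n + 1), #{i ∈ Icc 1 #I | m < i} =
      ∑ m ∈ range (n + 1), #{i ∈ I | m < i} := by
    rw [← sum_id_eq_sum_range_card_filter_lt fun i hi => (mem_Icc.1 (hIcc hi)).2,
      ← sum_id_eq_sum_range_card_filter_lt fun i hi => (mem_Icc.1 (hIn hi)).2]
    exact le_antisymm (sum_Icc_card_le_sum_id hI) h
  -- compare the terms `m = #I`: no element of `I` exceeds `#I`
  have hnone := (sum_eq_sum_iff_of_le hle).1 hsum #I
    (mem_range.2 (Nat.lt_succ_of_le (card_le_of_subset_Icc_one hI)))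
  have hIcc_none : #{i ∈ Icc 1 #I | #I < i} = 0 :=
    card_eq_zero.2 (filter_eq_empty_iff.2 fun j hj => not_lt.2 (mem_Icc.1 hj).2)
  rw [hIcc_none, eq_comm, card_eq_zero, filter_eq_empty_iff] at hnone
  have hsub : I ⊆ Icc 1 #I := fun i hi =>
    mem_Icc.2 ⟨(mem_Icc.1 (hI hi)).1, not_lt.1 (hnone hi)⟩
  exact eq_of_subset_of_card_le hsub (by simp)

end PrefixCounts

theorem isAdmissible_Icc {n s : ℕ} (hs : 0 < s) (hsn : s < n) : IsAdmissible n s (Icc 1 s) := by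
  refine ⟨Icc_subset_Icc_right hsn.le, by simp, fun m hm hmn => ?_⟩
  rw [card_Icc_one_inter_Icc_one]
  rcases le_total s m with h | h
  · rw [min_eq_left h, Nat.mul_comm n]
    exact Nat.mul_lt_mul_of_pos_left hmn hs
  · rw [min_eq_right h]
    exact Nat.mul_lt_mul_of_pos_right hsn hm

def maxAdmissible (n s : ℕ) : Finset ℕ := (range s).image fun j => j * n / s + 1

section maxAdmissible

variable {n s : ℕ}

theorem strictMono_mul_div_add_one (hs : 0 < s) (hsn : s ≤ n) :
    StrictMono fun j => j * n / s + 1 :=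
  strictMono_nat_of_lt_succ fun j => by
    have : j * n / s + 1 ≤ (j + 1) * n / s := by
      rw [← Nat.add_div_right _ hs, add_mul, one_mul]
      exact Nat.div_le_div_right (Nat.add_le_add_left hsn _)
    exact Nat.succ_lt_succ_iff.2 this

theorem card_maxAdmissible (hs : 0 < s) (hsn : s ≤ n) : #(maxAdmissible n s) = s := by
  rw [maxAdmissible, card_image_of_injective _ (strictMono_mul_div_add_one hs hsn).injective,
    card_range]

theorem maxAdmissible_subset_Icc (hn : 0 < n) : maxAdmissible n s ⊆ Icc 1 n := by
  intro i hi
  obtain ⟨j, hj, rfl⟩ := mem_image.1 hi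
  have hjn : j * n < s * n := Nat.mul_lt_mul_of_pos_right (mem_range.1 hj) hn
  exact mem_Icc.2 ⟨Nat.succ_pos _, Nat.div_lt_of_lt_mul hjn⟩

theorem card_maxAdmissible_inter_Icc (hs : 0 < s) (hsn : s < n) (hcop : n.Coprime s) {m : ℕ}
    (hm : 0 < m) (hmn : m < n) : #(maxAdmissible n s ∩ Icc 1 m) = s * m / n + 1 := by
  have hn : 0 < n := hs.trans hsn
  have hndvd : ¬ n ∣ s * m := fun h => by
    have := Nat.le_of_dvd hm (hcop.dvd_of_dvd_mul_left h)
    omega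
  have hle_iff : ∀ j, j * n / s + 1 ≤ m ↔ j < s * m / n + 1 := fun j => by
    rw [Nat.succ_le_iff, Nat.div_lt_iff_lt_mul hs, Nat.lt_succ_iff, Nat.le_div_iff_mul_le hn,
      Nat.mul_comm m]
    exact ⟨le_of_lt, fun h =>
      lt_of_le_of_ne h fun h' => hndvd ⟨j, by rw [← h', Nat.mul_comm]⟩⟩
  have hlt_s : s * m / n + 1 ≤ s :=
    Nat.div_lt_of_lt_mul (by rw [Nat.mul_comm n]; exact Nat.mul_lt_mul_of_pos_left hmn hs)
  have : maxAdmissible n s ∩ Icc 1 m = (range (s * m / n + 1)).image fun j => j * n / s + 1 := by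
    ext i
    simp only [maxAdmissible, mem_inter, mem_image, mem_range, mem_Icc]
    constructor
    · rintro ⟨⟨j, -, rfl⟩, -, hjm⟩
      exact ⟨j, (hle_iff j).1 hjm, rfl⟩
    · rintro ⟨j, hj, rfl⟩
      exact ⟨⟨j, hj.trans_le hlt_s, rfl⟩, Nat.succ_pos _, (hle_iff j).2 hj⟩
  rw [this, card_image_of_injective _ (strictMono_mul_div_add_one hs hsn.le).injective, card_range]

theorem isAdmissible_maxAdmissible (hs : 0 < s) (hsn : s < n) (hcop : n.Coprime s) :
    IsAdmissible n s (maxAdmissible n s) :=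
  ⟨maxAdmissible_subset_Icc (hs.trans hsn), card_maxAdmissible hs hsn.le, fun m hm hmn => by
    rw [card_maxAdmissible_inter_Icc hs hsn hcop hm hmn]
    exact Nat.lt_mul_div_succ _ (hs.trans hsn)⟩

theorem IsAdmissible.sum_id_le_sum_maxAdmissible {I : Finset ℕ} (hI : IsAdmissible n s I)
    (hs : 0 < s) (hsn : s < n) (hcop : n.Coprime s) :
    ∑ i ∈ I, i ≤ ∑ i ∈ maxAdmissible n s, i := by
  refine sum_id_le_sum_id_of_card_inter_Icc_le hI.1 (maxAdmissible_subset_Icc (hs.trans hsn))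
    (by rw [hI.2.1, card_maxAdmissible hs hsn.le]) fun m hmn => ?_
  rcases Nat.eq_zero_or_pos m with rfl | hm
  · simp
  · rw [card_maxAdmissible_inter_Icc hs hsn hcop hm hmn]
    exact Nat.div_lt_of_lt_mul (hI.2.2 m hm hmn)

theorem sum_maxAdmissible (hs : 0 < s) (hsn : s ≤ n) (hcop : n.Coprime s) :
    ∑ i ∈ maxAdmissible n s, i = 1 + ∑ j ∈ Icc 1 (s - 1), ⌈(j * n / s : ℚ)⌉₊ := by
  have hrange : range s = insert 0 (Icc 1 (s - 1)) := by
    ext j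
    simp only [mem_range, mem_insert, mem_Icc]
    omega
  rw [maxAdmissible, sum_image fun x _ y _ h => (strictMono_mul_div_add_one hs hsn).injective h,
    hrange, sum_insert (by simp), Nat.zero_mul, Nat.zero_div, Nat.zero_add]
  refine congrArg (1 + ·) (sum_congr rfl fun j hj => ?_)
  have hj := mem_Icc.1 hj
  have hndvd : ¬ s ∣ j * n := fun h => by
    have := Nat.le_of_dvd hj.1 (hcop.symm.dvd_of_dvd_mul_right h)
    omega
  rw [← Nat.cast_mul, Nat.ceil_natCast_div_natCast_of_not_dvd hs hndvd]

end maxAdmissible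

/-- Let `n` and `s` be coprime with `1 ≤ s < n`.  For every
`(n,s)`-admissible `I ⊆ {1, …, n}` the integer `e(I) = (∑ i ∈ I, i) - s(s+1)/2` is
nonnegative, and the polynomial `P(T) = ∑_{I admissible} T^{e(I)} ∈ ℤ[T]` has constant
term `1` and degree `1 + ∑_{j=1}^{s-1} ⌈j·n/s⌉ - s(s+1)/2`. -/
theorem kottwitz_polynomial_degree (n s : ℕ) (hs : 1 ≤ s) (hsn : s < n)
    (hcop : Nat.Coprime n s) :
    (∀ I : Finset ℕ, IsAdmissible n s I → s * (s + 1) / 2 ≤ ∑ i ∈ I, i) ∧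
    (∑ I ∈ (Finset.Icc 1 n).powerset.filter (IsAdmissible n s),
        (Polynomial.X : Polynomial ℤ) ^ ((∑ i ∈ I, i) - s * (s + 1) / 2)).coeff 0 = 1 ∧
    (∑ I ∈ (Finset.Icc 1 n).powerset.filter (IsAdmissible n s),
        (Polynomial.X : Polynomial ℤ) ^ ((∑ i ∈ I, i) - s * (s + 1) / 2)).natDegree =
      1 + (∑ j ∈ Finset.Icc 1 (s - 1), (⌈((j : ℚ) * n) / s⌉).toNat) - s * (s + 1) / 2 := by
  have hmem : ∀ {I}, IsAdmissible n s I → I ∈ (Icc 1 n).powerset.filter (IsAdmissible n s) :=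
    fun hI => mem_filter.2 ⟨mem_powerset.2 hI.1, hI⟩
  refine ⟨fun I hI => ?_, ?_, ?_⟩
  · simpa only [hI.2.1, sum_Icc_one_id] using sum_Icc_card_le_sum_id hI.1
  · have hmin : {I ∈ (Icc 1 n).powerset.filter (IsAdmissible n s) |
        (∑ i ∈ I, i) - s * (s + 1) / 2 = 0} = {Icc 1 s} := by
      ext I
      simp only [mem_filter, mem_singleton]
      constructor
      · rintro ⟨⟨-, hI⟩, he⟩
        have := eq_Icc_card_of_sum_id_le hI.1 (by rw [hI.2.1, sum_Icc_one_id]; omega)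
        rwa [hI.2.1] at this
      · rintro rfl
        exact ⟨mem_filter.1 (hmem (isAdmissible_Icc hs hsn)),
          by rw [sum_Icc_one_id, Nat.sub_self]⟩
    rw [coeff_sum_X_pow, hmin, card_singleton, Nat.cast_one]
  · rw [natDegree_sum_X_pow_eq (hmem (isAdmissible_maxAdmissible hs hsn hcop)) fun I hI =>
      Nat.sub_le_sub_right ((mem_filter.1 hI).2.sum_id_le_sum_maxAdmissible hs hsn hcop) _,
      sum_maxAdmissible hs hsn.le hcop]
    simp only [Int.ceil_toNat]
end
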